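/- Let G be a finite simple graph, let k ≥ 1, let P and Q be partitions of V(G) into independent sets, and let c₀ be any proper k-coloring of G with kernel partition P. Then the number of proper k-colorings of G □ P₂ whose layer-1 kernel partition equals P and whose layer-2 kernel partition equals Q is equal to (the number of proper k-colorings of G with kernel partition P) times (the number of proper k-colorings of G □ P₂ whose layer-1 coloring equals c₀ and whose layer-2 kernel partition equals Q). -/

import Mathlib

/-!
A proper coloring of `G □ P₂` is a pair of proper colorings `(c₁, c₂)` of `G` that differ at
every vertex. Permuting the colors preserves properness, kernels and the condition `c₁ ≠ c₂`
pointwise, and any two colorings with the same kernel differ by a permutation of the colors.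
Hence the number of admissible second layers over a first layer `c₁` with kernel `P` does not
depend on `c₁`, and the count factorizes.
-/

open SimpleGraph

section

variable {V α : Type*}

theorem Setoid.ker_comp_of_injective {β : Type*} {g : α → β} (hg : g.Injective) (f : V → α) :
    Setoid.ker (g ∘ f) = Setoid.ker f :=
  Setoid.ext fun _ _ => hg.eq_iff

theorem Setoid.exists_perm_apply_eq_of_ker_eq [Finite α] {c₀ c₁ : V → α}
    (h : Setoid.ker c₀ = Setoid.ker c₁) : ∃ π : Equiv.Perm α, ∀ v, π (c₀ v) = c₁ v := by
  classical
  let e : Set.range c₀ ≃ Set.range c₁ :=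
    (Setoid.quotientKerEquivRange c₀).symm.trans
      ((Quotient.congrRight (Setoid.ext_iff.mp h)).trans (Setoid.quotientKerEquivRange c₁))
  refine ⟨e.extendSubtype, fun v => ?_⟩
  rw [Equiv.extendSubtype_apply_of_mem e _ (Set.mem_range_self v)]
  have : (Setoid.quotientKerEquivRange c₀).symm ⟨c₀ v, Set.mem_range_self v⟩ = ⟦v⟧ :=
    (Equiv.symm_apply_eq _).mpr rfl
  simp only [e, Equiv.trans_apply, this]
  rfl

namespace SimpleGraph

theorem forall_boxProd_pathGraph_two_adj_ne_iff (G : SimpleGraph V) (c : V × Fin 2 → α) :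
    (∀ a b, (G.boxProd (pathGraph 2)).Adj a b → c a ≠ c b) ↔
      (∀ u v, G.Adj u v → c (u, 0) ≠ c (v, 0)) ∧
      (∀ u v, G.Adj u v → c (u, 1) ≠ c (v, 1)) ∧
      ∀ v, c (v, 0) ≠ c (v, 1) := by
  refine ⟨fun h => ⟨fun u v huv => h (u, 0) (v, 0) (by simp [huv]),
    fun u v huv => h (u, 1) (v, 1) (by simp [huv]),
    fun v => h (v, 0) (v, 1) (by simp [pathGraph_adj])⟩, ?_⟩
  rintro ⟨h0, h1, hc⟩ ⟨a, i⟩ ⟨b, j⟩ hadj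
  rcases boxProd_adj.mp hadj with ⟨hG, rfl : i = j⟩ | ⟨hp, rfl : a = b⟩
  · fin_cases i
    exacts [h0 _ _ hG, h1 _ _ hG]
  · rw [pathGraph_adj] at hp
    fin_cases i <;> fin_cases j <;> simp_all [eq_comm]

/-- Proper colorings `c₂` of `G` satisfying `q` that can be stacked on top of `c₁` in `G □ P₂`. -/
def NextLayer (G : SimpleGraph V) (q : (V → α) → Prop) (c₁ : V → α) : Type _ :=
  {c₂ : V → α // (∀ u v, G.Adj u v → c₂ u ≠ c₂ v) ∧ q c₂ ∧ ∀ v, c₁ v ≠ c₂ v}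

def boxProdPathGraphTwoColoringEquiv (G : SimpleGraph V) (p q : (V → α) → Prop) :
    {c : V × Fin 2 → α // (∀ a b, (G.boxProd (pathGraph 2)).Adj a b → c a ≠ c b) ∧
        p (fun v => c (v, 0)) ∧ q (fun v => c (v, 1))} ≃
      Σ c₁ : {c₁ : V → α // (∀ u v, G.Adj u v → c₁ u ≠ c₁ v) ∧ p c₁}, G.NextLayer q c₁.1 where
  toFun c :=
    have hc := (G.forall_boxProd_pathGraph_two_adj_ne_iff c.1).mp c.2.1
    ⟨⟨fun v => c.1 (v, 0), hc.1, c.2.2.1⟩, ⟨fun v => c.1 (v, 1), hc.2.1, c.2.2.2, hc.2.2⟩⟩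
  invFun c := ⟨fun x => if x.2 = 0 then c.1.1 x.1 else c.2.1 x.1,
    (G.forall_boxProd_pathGraph_two_adj_ne_iff _).mpr
      (by simpa using ⟨c.1.2.1, c.2.2.1, c.2.2.2.2⟩),
    by simpa using c.1.2.2, by simpa using c.2.2.2.1⟩
  left_inv c := by
    ext ⟨v, i⟩
    fin_cases i <;> rfl
  right_inv _ := rfl

def NextLayer.permCongr (G : SimpleGraph V) (Q : Setoid V) (π : Equiv.Perm α) (c₁ : V → α) :
    G.NextLayer (Setoid.ker · = Q) c₁ ≃ G.NextLayer (Setoid.ker · = Q) (π ∘ c₁) :=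
  (Equiv.piCongrRight fun _ => π).subtypeEquiv fun c₂ => by
    change _ ↔ (∀ u v, G.Adj u v → π (c₂ u) ≠ π (c₂ v)) ∧ Setoid.ker (π ∘ c₂) = Q ∧
      ∀ v, π (c₁ v) ≠ π (c₂ v)
    simp only [Setoid.ker_comp_of_injective π.injective, π.injective.ne_iff]

end SimpleGraph

end

theorem transfer_entry_orbit_factorization_general {V : Type*}
    (G : SimpleGraph V) (k : ℕ)
    (P Q : Setoid V)
    (c₀ : V → Fin k)
    (hc₀proper : ∀ u v, G.Adj u v → c₀ u ≠ c₀ v)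
    (hc₀ker : Setoid.ker c₀ = P) :
    Nat.card {c : V × Fin 2 → Fin k //
        (∀ a b, (G.boxProd (pathGraph 2)).Adj a b → c a ≠ c b) ∧
        Setoid.ker (fun v => c (v, 0)) = P ∧
        Setoid.ker (fun v => c (v, 1)) = Q} =
    Nat.card {c : V → Fin k //
        (∀ u v, G.Adj u v → c u ≠ c v) ∧ Setoid.ker c = P} *
    Nat.card {c : V × Fin 2 → Fin k //
        (∀ a b, (G.boxProd (pathGraph 2)).Adj a b → c a ≠ c b) ∧
        (∀ v, c (v, 0) = c₀ v) ∧
        Setoid.ker (fun v => c (v, 1)) = Q} := by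
  set S := {c : V → Fin k // (∀ u v, G.Adj u v → c u ≠ c v) ∧ Setoid.ker c = P}
  have fiber (c₁ : S) : G.NextLayer (Setoid.ker · = Q) c₁.1 ≃ G.NextLayer (Setoid.ker · = Q) c₀ :=
    have hπ := (Setoid.exists_perm_apply_eq_of_ker_eq (c₁.2.2.trans hc₀ker.symm)).choose_spec
    (NextLayer.permCongr G Q _ c₁.1).trans (Equiv.cast (by rw [Function.comp_def, funext hπ]))
  let : Unique {c₁ : V → Fin k // (∀ u v, G.Adj u v → c₁ u ≠ c₁ v) ∧ ∀ v, c₁ v = c₀ v} :=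
    ⟨⟨⟨c₀, hc₀proper, fun _ => rfl⟩⟩, fun c => Subtype.ext (funext c.2.2)⟩
  rw [Nat.card_congr (G.boxProdPathGraphTwoColoringEquiv (Setoid.ker · = P) (Setoid.ker · = Q)),
    Nat.card_congr (G.boxProdPathGraphTwoColoringEquiv (fun c₁ => ∀ v, c₁ v = c₀ v)
      (Setoid.ker · = Q)),
    Nat.card_congr ((Equiv.sigmaCongrRight fiber).trans (Equiv.sigmaEquivProd _ _)),
    Nat.card_prod, Nat.card_congr (Equiv.uniqueSigma _)]
  rfl

/-- The number of proper `k`-colorings of `G □ P₂` with layer-1 kernel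
partition `P` and layer-2 kernel partition `Q` factors as (number of proper
`k`-colorings of `G` with kernel partition `P`) times (number of such colorings with
layer-1 coloring equal to a fixed representative `c₀`). -/
theorem transfer_entry_orbit_factorization {V : Type*} [Fintype V] [DecidableEq V]
    (G : SimpleGraph V) (k : ℕ) (hk : 1 ≤ k)
    (P Q : Setoid V)
    (hP : ∀ u v, P.r u v → ¬ G.Adj u v)
    (hQ : ∀ u v, Q.r u v → ¬ G.Adj u v)
    (c₀ : V → Fin k)
    (hc₀proper : ∀ u v, G.Adj u v → c₀ u ≠ c₀ v)
    (hc₀ker : Setoid.ker c₀ = P) :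
    Nat.card {c : V × Fin 2 → Fin k //
        (∀ a b, (G.boxProd (pathGraph 2)).Adj a b → c a ≠ c b) ∧
        Setoid.ker (fun v => c (v, 0)) = P ∧
        Setoid.ker (fun v => c (v, 1)) = Q} =
    Nat.card {c : V → Fin k //
        (∀ u v, G.Adj u v → c u ≠ c v) ∧ Setoid.ker c = P} *
    Nat.card {c : V × Fin 2 → Fin k //
        (∀ a b, (G.boxProd (pathGraph 2)).Adj a b → c a ≠ c b) ∧
        (∀ v, c (v, 0) = c₀ v) ∧
        Setoid.ker (fun v => c (v, 1)) = Q} :=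
  transfer_entry_orbit_factorization_general G k P Q c₀ hc₀proper hc₀ker
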